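/- Let S be a finite totally ordered set and P an attractive, non-degenerate PCA dynamics on S^{Z^d}; let Λ ⊂ Λ' be finite subsets of Z^d. Then, as probability measures on S^{Λ'}, ν_{Λ'}^+ ⪯ ν_Λ^+ ⊗ δ_{+_{Λ'∖Λ}} and ν_Λ^- ⊗ δ_{-_{Λ'∖Λ}} ⪯ ν_{Λ'}^- in the stochastic order; in particular the projection of ν_{Λ'}^+ onto S^Λ is stochastically dominated by ν_Λ^+, and the projection of ν_{Λ'}^- onto S^Λ stochastically dominates ν_Λ^-. -/

import Mathlib

open MeasureTheory ProbabilityTheory Filter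

abbrev Site (d : ℕ) : Type := Fin d → ℤ
abbrev Config (d : ℕ) (S : Type*) : Type _ := Site d → S

/-- Stochastic ordering of measures: `ν₁ ⪯ ν₂` iff `ν₁(f) ≤ ν₂(f)` for every
bounded measurable increasing `f`. -/
def StochLE {α : Type*} [MeasurableSpace α] [Preorder α] (μ ν : Measure α) : Prop :=
  ∀ f : α → ℝ, Measurable f → Monotone f → (∃ C, ∀ x, |f x| ≤ C) →
    ∫ x, f x ∂μ ≤ ∫ x, f x ∂ν

/-- A (local) PCA dynamics on `S^{ℤ^d}`: a Markov kernel together with its family of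
local updating rules, the kernel being the product over sites of the updating rules. -/
structure PCA (d : ℕ) (S : Type*) [MeasurableSpace S] where
  rule : Site d → Config d S → Measure S
  rule_prob : ∀ k η, IsProbabilityMeasure (rule k η)
  rule_local : ∀ k : Site d, ∃ V : Finset (Site d), ∀ η η' : Config d S,
      (∀ j ∈ V, η j = η' j) → rule k η = rule k η'
  toKernel : Kernel (Config d S) (Config d S)
  markov : IsMarkovKernel toKernel
  product : ∀ (η : Config d S) (Λ : Finset (Site d)) (y : Site d → S),
      toKernel η {σ : Config d S | ∀ k ∈ Λ, σ k = y k} = ∏ k ∈ Λ, rule k η {y k}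


/-- An `N`-tuple of PCA dynamics is increasing if ordered configurations give
stochastically ordered transition measures. -/
def IncreasingTuple {d : ℕ} {S : Type*} [MeasurableSpace S] [Preorder S] {N : ℕ}
    (P : Fin N → PCA d S) : Prop :=
  ∀ ζ : Fin N → Config d S, Monotone ζ →
    ∀ i j : Fin N, i ≤ j → StochLE ((P i).toKernel (ζ i)) ((P j).toKernel (ζ j))

/-- A PCA dynamics is attractive if it maps bounded measurable increasing functions to
increasing functions. -/
def Attractive {d : ℕ} {S : Type*} [MeasurableSpace S] [Preorder S] (P : PCA d S) : Prop :=
  ∀ f : Config d S → ℝ, Measurable f → Monotone f → (∃ C, ∀ x, |f x| ≤ C) →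
    Monotone fun η => ∫ σ, f σ ∂(P.toKernel η)

/-- The maximal element of a nonempty finite linear order. -/
noncomputable def topS (S : Type*) [Fintype S] [LinearOrder S] [Nonempty S] : S :=
  Finset.univ.max' Finset.univ_nonempty


/-- The minimal element of a nonempty finite linear order. -/
noncomputable def botS (S : Type*) [Fintype S] [LinearOrder S] [Nonempty S] : S :=
  Finset.univ.min' Finset.univ_nonempty


/-- A PCA dynamics is non degenerate when all its updating rules give positive
probability to every spin value. -/
def NonDegenerate {d : ℕ} {S : Type*} [MeasurableSpace S] (P : PCA d S) : Prop :=
  ∀ (k : Site d) (η : Config d S) (s : S), P.rule k η {s} ≠ 0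


/-- The configuration equal to `η` on `Λ` and to `τ` outside `Λ`. -/
def fvCombine {d : ℕ} {S : Type*} (Λ : Finset (Site d)) (η : Λ → S) (τ : Config d S) :
    Config d S :=
  fun x => if h : x ∈ Λ then η ⟨x, h⟩ else τ x


/-- The transition kernel of the finite volume PCA dynamics in `Λ` with boundary
condition `τ`, as a Markov chain on `S^Λ`. -/
noncomputable def finVolKernel {d : ℕ} {S : Type*} [MeasurableSpace S] (P : PCA d S)
    (Λ : Finset (Site d)) (τ : Config d S) : (Λ → S) → Measure (Λ → S) :=
  fun η => Measure.pi fun k : Λ => P.rule k (fvCombine Λ η τ)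

/-! By non-degeneracy every finite-volume chain puts mass at least `c > 0` on one fixed state
from any starting point (a Doeblin condition), so the oscillation of `Kⁿ g` decays like
`(1 - c)ⁿ` and `Kⁿ g x → ∫ g dν` for the stationary measure `ν`. Attractiveness lets the
one-step comparison between the `Λ'`- and `Λ`-chains (freezing the sites of `Λ' \ Λ` at `+`
only raises the `+` dynamics; for `-` it is an equality) pass to all iterates of increasing
functions. Integrating the iterates against the stationary measure of the dominated chain and
letting `n → ∞` compares the stationary measures; the projections follow by pushing forward
along the increasing restriction map `S^{Λ'} → S^Λ`. -/

section MarkovOperator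

variable {α : Type*} [MeasurableSpace α] {κ : Kernel α α}

noncomputable def markovOp (κ : Kernel α α) (h : α → ℝ) : α → ℝ := fun x => ∫ y, h y ∂κ x

lemma Monotone.iterate_markovOp [Preorder α]
    (hκ : ∀ h : α → ℝ, Monotone h → Monotone (markovOp κ h)) {h : α → ℝ} (hh : Monotone h)
    (n : ℕ) : Monotone ((markovOp κ)^[n] h) := by
  induction n with
  | zero => exact hh
  | succ n ih => simpa only [Function.iterate_succ_apply'] using hκ _ ih

variable [Finite α]

lemma exists_pos_le_measureReal_singleton [IsFiniteKernel κ] {a : α} (ha : ∀ x, κ x {a} ≠ 0) :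
    ∃ c > 0, ∀ x, c ≤ (κ x).real {a} := by
  have : Nonempty α := ⟨a⟩
  obtain ⟨x₀, hx₀⟩ := Finite.exists_min fun x => (κ x).real {a}
  exact ⟨_, ENNReal.toReal_pos (ha x₀) (measure_ne_top _ _), hx₀⟩

variable [MeasurableSingletonClass α]

lemma markovOp_mono [IsFiniteKernel κ] {h₁ h₂ : α → ℝ} (h : h₁ ≤ h₂) :
    markovOp κ h₁ ≤ markovOp κ h₂ :=
  fun _ => integral_mono .of_finite .of_finite h

lemma ProbabilityTheory.Kernel.Invariant.integral_markovOp [IsFiniteKernel κ] {ν : Measure α}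
    [IsFiniteMeasure ν] (hν : κ.Invariant ν) (h : α → ℝ) :
    ∫ x, markovOp κ h x ∂ν = ∫ x, h x ∂ν := by
  have hcomp := Kernel.integral_comp (η := κ) (κ := Kernel.const Unit ν) (a := ())
    (f := h) .of_finite
  rw [Kernel.comp_apply, Kernel.const_apply, hν.def] at hcomp
  exact hcomp.symm

lemma ProbabilityTheory.Kernel.Invariant.integral_iterate_markovOp [IsFiniteKernel κ]
    {ν : Measure α} [IsFiniteMeasure ν] (hν : κ.Invariant ν) (h : α → ℝ) (n : ℕ) :
    ∫ x, (markovOp κ)^[n] h x ∂ν = ∫ x, h x ∂ν := by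
  induction n with
  | zero => rfl
  | succ n ih => rw [Function.iterate_succ_apply', hν.integral_markovOp, ih]

lemma markovOp_sub_le [IsMarkovKernel κ] {a : α} {c : ℝ} (hc : ∀ x, c ≤ (κ x).real {a})
    {h : α → ℝ} {δ : ℝ} (hδ : ∀ x y, h x - h y ≤ δ) (x y : α) :
    markovOp κ h x - markovOp κ h y ≤ (1 - c) * δ := by
  classical
  have := Fintype.ofFinite α
  have : Nonempty α := ⟨a⟩
  obtain ⟨zmax, hmax⟩ := Finite.exists_max h
  obtain ⟨zmin, hmin⟩ := Finite.exists_min h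
  -- Both `κ x` and `κ y` contain the mass `c` at `a`; only the remainders `w x`, `w y`, of
  -- total mass `1 - c`, can see the oscillation of `h`.
  set w : α → α → ℝ := fun u z => (κ u).real {z} - if z = a then c else 0
  have hw_nonneg : ∀ u z, 0 ≤ w u z := by
    intro u z
    by_cases hz : z = a
    · simpa [w, hz] using hc u
    · simp [w, hz]
  have hw_sum : ∀ u, ∑ z, w u z = 1 - c := by
    intro u
    simp [w, Finset.sum_sub_distrib]
  have hsplit : ∀ u, markovOp κ h u = c * h a + ∑ z, w u z * h z := by
    intro u
    simp [markovOp, integral_fintype .of_finite, w, sub_mul, Finset.sum_sub_distrib, ite_mul]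
  have upper : ∑ z, w x z * h z ≤ (1 - c) * h zmax := by
    rw [← hw_sum x, Finset.sum_mul]
    exact Finset.sum_le_sum fun z _ => mul_le_mul_of_nonneg_left (hmax z) (hw_nonneg x z)
  have lower : (1 - c) * h zmin ≤ ∑ z, w y z * h z := by
    rw [← hw_sum y, Finset.sum_mul]
    exact Finset.sum_le_sum fun z _ => mul_le_mul_of_nonneg_left (hmin z) (hw_nonneg y z)
  have hc1 : 0 ≤ 1 - c := hw_sum a ▸ Finset.sum_nonneg fun z _ => hw_nonneg a z
  rw [hsplit, hsplit]
  nlinarith [mul_le_mul_of_nonneg_left (hδ zmax zmin) hc1]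

lemma iterate_markovOp_sub_le [IsMarkovKernel κ] {a : α} {c : ℝ}
    (hc : ∀ x, c ≤ (κ x).real {a}) {h : α → ℝ} {δ : ℝ} (hδ : ∀ x y, h x - h y ≤ δ) (n : ℕ) :
    ∀ x y, (markovOp κ)^[n] h x - (markovOp κ)^[n] h y ≤ (1 - c) ^ n * δ := by
  induction n with
  | zero => simpa using hδ
  | succ n ih =>
    intro x y
    simpa only [Function.iterate_succ_apply', pow_succ', mul_assoc] using
      markovOp_sub_le hc ih x y

lemma ProbabilityTheory.Kernel.Invariant.iterate_markovOp_le [IsMarkovKernel κ]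
    {ν : Measure α} [IsProbabilityMeasure ν] (hν : κ.Invariant ν) {a : α} {c : ℝ}
    (hc : ∀ x, c ≤ (κ x).real {a}) {h : α → ℝ} {δ : ℝ} (hδ : ∀ x y, h x - h y ≤ δ)
    (n : ℕ) (x : α) :
    (markovOp κ)^[n] h x ≤ ∫ y, h y ∂ν + (1 - c) ^ n * δ := by
  have hlow : ∀ y, (markovOp κ)^[n] h x - (1 - c) ^ n * δ ≤ (markovOp κ)^[n] h y := fun y => by
    linarith [iterate_markovOp_sub_le hc hδ n x y]
  calc (markovOp κ)^[n] h x
        = ∫ _, ((markovOp κ)^[n] h x - (1 - c) ^ n * δ) ∂ν + (1 - c) ^ n * δ := by simp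
    _ ≤ ∫ y, (markovOp κ)^[n] h y ∂ν + (1 - c) ^ n * δ :=
        add_le_add_left (integral_mono (integrable_const _) .of_finite hlow) _
    _ = ∫ y, h y ∂ν + (1 - c) ^ n * δ := by rw [hν.integral_iterate_markovOp]

theorem integral_le_integral_of_invariant {β : Type*} [MeasurableSpace β] [Finite β]
    [MeasurableSingletonClass β] [Preorder α] {κ : Kernel α α} {κ' : Kernel β β}
    [IsMarkovKernel κ] [IsFiniteKernel κ'] {a : α} (ha : ∀ x, κ x {a} ≠ 0)
    (hκ : ∀ h : α → ℝ, Monotone h → Monotone (markovOp κ h)) (π : β → α)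
    (hcomp : ∀ h : α → ℝ, Monotone h → ∀ y, markovOp κ' (h ∘ π) y ≤ markovOp κ h (π y))
    {ν : Measure α} {ν' : Measure β} [IsProbabilityMeasure ν] [IsProbabilityMeasure ν']
    (hν : κ.Invariant ν) (hν' : κ'.Invariant ν') {f : β → ℝ} {g : α → ℝ} (hg : Monotone g)
    (hfg : ∀ y, f y ≤ g (π y)) :
    ∫ y, f y ∂ν' ≤ ∫ x, g x ∂ν := by
  obtain ⟨c, hc_pos, hc⟩ := exists_pos_le_measureReal_singleton ha
  have hc_le : c ≤ 1 := (hc a).trans measureReal_le_one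
  obtain ⟨δ, hδ⟩ := Finite.bddAbove_range fun p : α × α => g p.1 - g p.2
  have hg_osc : ∀ x y, g x - g y ≤ δ := fun x y => hδ ⟨(x, y), rfl⟩
  have hiter : ∀ n y, (markovOp κ')^[n] f y ≤ (markovOp κ)^[n] g (π y) := by
    intro n
    induction n with
    | zero => exact hfg
    | succ n ih =>
      intro y
      simp only [Function.iterate_succ_apply']
      exact (markovOp_mono ih y).trans (hcomp _ (hg.iterate_markovOp hκ n) y)
  have hbound : ∀ n : ℕ, ∫ y, f y ∂ν' ≤ ∫ x, g x ∂ν + (1 - c) ^ n * δ := by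
    intro n
    calc ∫ y, f y ∂ν' = ∫ y, (markovOp κ')^[n] f y ∂ν' :=
          (hν'.integral_iterate_markovOp f n).symm
      _ ≤ ∫ _, (∫ x, g x ∂ν + (1 - c) ^ n * δ) ∂ν' :=
          integral_mono .of_finite (integrable_const _) fun y =>
            (hiter n y).trans (hν.iterate_markovOp_le hc hg_osc n (π y))
      _ = ∫ x, g x ∂ν + (1 - c) ^ n * δ := by simp
  have hlim : Tendsto (fun n : ℕ => ∫ x, g x ∂ν + (1 - c) ^ n * δ) atTop
      (nhds (∫ x, g x ∂ν)) := by
    simpa using tendsto_const_nhds.add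
      ((tendsto_pow_atTop_nhds_zero_of_lt_one (by linarith) (by linarith)).mul_const δ)
  exact ge_of_tendsto' hlim hbound

end MarkovOperator

lemma Finset.monotone_restrict {ι α : Type*} [Preorder α] (s : Finset ι) :
    Monotone (s.restrict (π := fun _ => α)) :=
  fun _ _ h k => h k

lemma Finset.monotone_restrict₂ {ι α : Type*} [Preorder α] {s t : Finset ι} (hst : s ⊆ t) :
    Monotone (Finset.restrict₂ (π := fun _ => α) hst) :=
  fun _ _ h _ => h _

section PCA

variable {d : ℕ} {S : Type*}

lemma fvCombine_restrict (Λ : Finset (Site d)) (η : Λ → S) (τ : Config d S) :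
    Λ.restrict (fvCombine Λ η τ) = η := by
  funext k; simp [fvCombine]

lemma fvCombine_restrict_fvCombine {Λ Λ' : Finset (Site d)} (hΛ : Λ ⊆ Λ') (η : Λ → S)
    (τ : Config d S) : fvCombine Λ' (Λ'.restrict (fvCombine Λ η τ)) τ = fvCombine Λ η τ := by
  funext x
  by_cases hx : x ∈ Λ
  · simp [fvCombine, hx, hΛ hx]
  · by_cases hx' : x ∈ Λ' <;> simp [fvCombine, hx, hx']

lemma monotone_fvCombine [Preorder S] (Λ : Finset (Site d)) (τ : Config d S) :
    Monotone fun η : Λ → S => fvCombine Λ η τ := by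
  intro η₁ η₂ hη x
  dsimp only [fvCombine]
  split_ifs
  · exact hη _
  · exact le_rfl

lemma fvCombine_restrict_le [Preorder S] (Λ : Finset (Site d)) {σ τ : Config d S}
    (hτ : τ ≤ σ) : fvCombine Λ (Λ.restrict σ) τ ≤ σ := by
  intro x
  dsimp only [fvCombine]
  split_ifs
  · exact le_rfl
  · exact hτ x

lemma fvCombine_le_fvCombine_restrict₂ [Preorder S] {Λ Λ' : Finset (Site d)} (hΛ : Λ ⊆ Λ')
    (η' : Λ' → S) {τ : Config d S} (hτ : ∀ x (hx : x ∈ Λ'), η' ⟨x, hx⟩ ≤ τ x) :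
    fvCombine Λ' η' τ ≤ fvCombine Λ (Finset.restrict₂ (π := fun _ => S) hΛ η') τ := by
  intro x
  dsimp only [fvCombine]
  split_ifs with hx' hx hx
  · exact le_rfl
  · exact hτ x hx'
  · exact absurd (hΛ hx) hx'
  · exact le_rfl

variable [MeasurableSpace S]

instance (P : PCA d S) (k : Site d) (η : Config d S) : IsProbabilityMeasure (P.rule k η) :=
  P.rule_prob k η

instance (P : PCA d S) : IsMarkovKernel P.toKernel := P.markov

instance (P : PCA d S) (Λ : Finset (Site d)) (τ : Config d S) (η : Λ → S) :
    IsProbabilityMeasure (finVolKernel P Λ τ η) := by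
  unfold finVolKernel; infer_instance

lemma finVolKernel_singleton_ne_zero {P : PCA d S} (hND : NonDegenerate P)
    (Λ : Finset (Site d)) (τ : Config d S) (η y : Λ → S) : finVolKernel P Λ τ η {y} ≠ 0 := by
  rw [finVolKernel, Measure.pi_singleton, Finset.prod_ne_zero_iff]
  exact fun k _ => hND _ _ _

variable [Countable S] [MeasurableSingletonClass S]

lemma PCA.map_restrict (P : PCA d S) (η : Config d S) (Λ : Finset (Site d)) :
    (P.toKernel η).map Λ.restrict = Measure.pi fun k : Λ => P.rule k η := by
  refine Measure.ext_of_singleton fun y => ?_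
  have hpre : Λ.restrict ⁻¹' ({y} : Set (Λ → S))
      = {σ : Config d S | ∀ k ∈ Λ, σ k = fvCombine Λ y η k} := by
    ext σ
    simp +contextual [funext_iff, fvCombine]
  rw [Measure.map_apply (Finset.measurable_restrict Λ) (measurableSet_singleton y), hpre,
    P.product, Measure.pi_singleton, ← Finset.prod_coe_sort Λ]
  simp [fvCombine]

lemma integral_finVolKernel (P : PCA d S) (Λ : Finset (Site d)) (τ : Config d S) (η : Λ → S)
    (h : (Λ → S) → ℝ) :
    ∫ x, h x ∂finVolKernel P Λ τ η = ∫ σ, h (Λ.restrict σ) ∂P.toKernel (fvCombine Λ η τ) := by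
  rw [finVolKernel, ← P.map_restrict, integral_map (Finset.measurable_restrict Λ).aemeasurable
    (Measurable.of_discrete).aestronglyMeasurable]

end PCA

section Attractive

variable {d : ℕ} {S : Type*} [MeasurableSpace S] [Finite S] [MeasurableSingletonClass S]
  {P : PCA d S}

noncomputable def finVolMarkovKernel (P : PCA d S) (Λ : Finset (Site d)) (τ : Config d S) :
    Kernel (Λ → S) (Λ → S) :=
  ⟨finVolKernel P Λ τ, .of_discrete⟩

instance (P : PCA d S) (Λ : Finset (Site d)) (τ : Config d S) :
    IsMarkovKernel (finVolMarkovKernel P Λ τ) :=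
  ⟨fun η => inferInstanceAs (IsProbabilityMeasure (finVolKernel P Λ τ η))⟩

variable [Preorder S]

lemma Attractive.integral_finVolKernel_le (hA : Attractive P) {Λ₁ Λ₂ : Finset (Site d)}
    {τ₁ τ₂ : Config d S} {η₁ : Λ₁ → S} {η₂ : Λ₂ → S}
    (hξ : fvCombine Λ₁ η₁ τ₁ ≤ fvCombine Λ₂ η₂ τ₂) {h₁ : (Λ₁ → S) → ℝ} {h₂ : (Λ₂ → S) → ℝ}
    (hh₂ : Monotone h₂) (hh : ∀ σ : Config d S, h₁ (Λ₁.restrict σ) ≤ h₂ (Λ₂.restrict σ)) :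
    ∫ x, h₁ x ∂finVolKernel P Λ₁ τ₁ η₁ ≤ ∫ x, h₂ x ∂finVolKernel P Λ₂ τ₂ η₂ := by
  have hint : ∀ (Λ : Finset (Site d)) (h : (Λ → S) → ℝ) (ξ : Config d S),
      Integrable (fun σ => h (Λ.restrict σ)) (P.toKernel ξ) := fun Λ _ _ =>
    Integrable.of_finite.comp_measurable (Finset.measurable_restrict Λ)
  obtain ⟨C, hC⟩ := Finite.bddAbove_range fun x => |h₂ x|
  rw [integral_finVolKernel, integral_finVolKernel]
  calc ∫ σ, h₁ (Λ₁.restrict σ) ∂P.toKernel (fvCombine Λ₁ η₁ τ₁)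
      ≤ ∫ σ, h₂ (Λ₂.restrict σ) ∂P.toKernel (fvCombine Λ₁ η₁ τ₁) :=
        integral_mono (hint _ _ _) (hint _ _ _) hh
    _ ≤ ∫ σ, h₂ (Λ₂.restrict σ) ∂P.toKernel (fvCombine Λ₂ η₂ τ₂) :=
        hA _ (Measurable.of_discrete.comp (Finset.measurable_restrict Λ₂))
          (hh₂.comp Λ₂.monotone_restrict) ⟨C, fun σ => hC ⟨Λ₂.restrict σ, rfl⟩⟩ hξ

lemma Attractive.monotone_markovOp_finVolMarkovKernel (hA : Attractive P) (Λ : Finset (Site d))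
    (τ : Config d S) (h : (Λ → S) → ℝ) (hh : Monotone h) :
    Monotone (markovOp (finVolMarkovKernel P Λ τ) h) :=
  fun _ _ hη => hA.integral_finVolKernel_le (monotone_fvCombine Λ τ hη) hh fun _ => le_rfl

end Attractive

lemma StochLE.map {α β : Type*} [MeasurableSpace α] [MeasurableSpace β] [Preorder α] [Preorder β]
    {μ ν : Measure α} (h : StochLE μ ν) {φ : α → β} (hφ : Measurable φ) (hφ_mono : Monotone φ) :
    StochLE (μ.map φ) (ν.map φ) := by
  intro f hf hf_mono ⟨C, hC⟩
  rw [integral_map hφ.aemeasurable hf.aestronglyMeasurable,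
    integral_map hφ.aemeasurable hf.aestronglyMeasurable]
  exact h _ (hf.comp hφ) (hf_mono.comp hφ_mono) ⟨C, fun x => hC _⟩

section Extremal

variable {d : ℕ} {S : Type*} [Fintype S] [LinearOrder S] [Nonempty S]

lemma le_topS (s : S) : s ≤ topS S := Finset.le_max' _ _ (Finset.mem_univ _)

lemma botS_le (s : S) : botS S ≤ s := Finset.min'_le _ _ (Finset.mem_univ _)

variable [MeasurableSpace S] [MeasurableSingletonClass S] {P : PCA d S}

theorem Attractive.stochLE_map_extend_topS (hA : Attractive P) (hND : NonDegenerate P)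
    {Λ Λ' : Finset (Site d)} (hΛ : Λ ⊆ Λ') {ν : Measure (Λ → S)} {ν' : Measure (Λ' → S)}
    [IsProbabilityMeasure ν] [IsProbabilityMeasure ν']
    (hν : ν.bind (finVolKernel P Λ fun _ => topS S) = ν)
    (hν' : ν'.bind (finVolKernel P Λ' fun _ => topS S) = ν') :
    StochLE ν' (ν.map fun ω => Λ'.restrict (fvCombine Λ ω fun _ => topS S)) := by
  have hfreeze (η' : Λ' → S) : fvCombine Λ' η' (fun _ => topS S)
      ≤ fvCombine Λ (Finset.restrict₂ (π := fun _ => S) hΛ η') fun _ => topS S :=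
    fvCombine_le_fvCombine_restrict₂ hΛ η' fun _ _ => le_topS _
  intro f _ hf _
  rw [integral_map Measurable.of_discrete.aemeasurable Measurable.of_discrete.aestronglyMeasurable]
  refine integral_le_integral_of_invariant (κ := finVolMarkovKernel P Λ _)
    (κ' := finVolMarkovKernel P Λ' _) (a := fun _ => topS S)
    (fun η => finVolKernel_singleton_ne_zero hND _ _ η _)
    (hA.monotone_markovOp_finVolMarkovKernel _ _) (Finset.restrict₂ (π := fun _ => S) hΛ)
    (fun h hh η' => hA.integral_finVolKernel_le (hfreeze η') hh fun _ => le_rfl) hν hν'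
    (hf.comp (Λ'.monotone_restrict.comp (monotone_fvCombine Λ _))) fun η' => hf ?_
  calc η' = Λ'.restrict (fvCombine Λ' η' fun _ => topS S) := (fvCombine_restrict _ _ _).symm
    _ ≤ _ := fun k => hfreeze η' k

theorem Attractive.stochLE_map_extend_botS (hA : Attractive P) (hND : NonDegenerate P)
    {Λ Λ' : Finset (Site d)} (hΛ : Λ ⊆ Λ') {ν : Measure (Λ → S)} {ν' : Measure (Λ' → S)}
    [IsProbabilityMeasure ν] [IsProbabilityMeasure ν']
    (hν : ν.bind (finVolKernel P Λ fun _ => botS S) = ν)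
    (hν' : ν'.bind (finVolKernel P Λ' fun _ => botS S) = ν') :
    StochLE (ν.map fun ω => Λ'.restrict (fvCombine Λ ω fun _ => botS S)) ν' := by
  intro f _ hf _
  rw [integral_map Measurable.of_discrete.aemeasurable Measurable.of_discrete.aestronglyMeasurable]
  refine integral_le_integral_of_invariant (κ := finVolMarkovKernel P Λ' _)
    (κ' := finVolMarkovKernel P Λ _) (a := fun _ => botS S)
    (fun η => finVolKernel_singleton_ne_zero hND _ _ η _)
    (hA.monotone_markovOp_finVolMarkovKernel _ _) _
    (fun h hh η => hA.integral_finVolKernel_le (fvCombine_restrict_fvCombine hΛ η _).ge hh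
      fun σ => hh fun k => fvCombine_restrict_le Λ (fun x => botS_le (σ x)) k) hν' hν hf
    fun _ => le_rfl

end Extremal

theorem stmt8_general {d : ℕ}
    {S : Type} [Fintype S] [LinearOrder S] [Nonempty S]
    [MeasurableSpace S] [MeasurableSingletonClass S]
    (P : PCA d S) (hA : Attractive P) (hND : NonDegenerate P)
    (Λ Λ' : Finset (Site d)) (hΛ : Λ ⊆ Λ')
    (νm νp : Measure (Λ → S)) (νm' νp' : Measure (Λ' → S))
    (hνm : IsProbabilityMeasure νm) (hνp : IsProbabilityMeasure νp)
    (hνm' : IsProbabilityMeasure νm') (hνp' : IsProbabilityMeasure νp')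
    (hm : νm.bind (finVolKernel P Λ fun _ => botS S) = νm)
    (hp : νp.bind (finVolKernel P Λ fun _ => topS S) = νp)
    (hm' : νm'.bind (finVolKernel P Λ' fun _ => botS S) = νm')
    (hp' : νp'.bind (finVolKernel P Λ' fun _ => topS S) = νp') :
    StochLE νp'
      (νp.map fun (ω : Λ → S) (k : Λ') => if h : ↑k ∈ Λ then ω ⟨↑k, h⟩ else topS S) ∧
    StochLE
      (νm.map fun (ω : Λ → S) (k : Λ') => if h : ↑k ∈ Λ then ω ⟨↑k, h⟩ else botS S) νm' ∧
    StochLE (νp'.map fun (ω : Λ' → S) (k : Λ) => ω ⟨↑k, hΛ k.2⟩) νp ∧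
    StochLE νm (νm'.map fun (ω : Λ' → S) (k : Λ) => ω ⟨↑k, hΛ k.2⟩) := by
  have hplus := hA.stochLE_map_extend_topS hND hΛ hp hp'
  have hminus := hA.stochLE_map_extend_botS hND hΛ hm hm'
  have hproject (τ : Config d S) :
      (Finset.restrict₂ hΛ ∘ fun ω => Λ'.restrict (fvCombine Λ ω τ)) = id :=
    funext fun ω => fvCombine_restrict Λ ω τ
  refine ⟨hplus, hminus, ?_, ?_⟩
  · have := hplus.map (Finset.measurable_restrict₂ hΛ) (Finset.monotone_restrict₂ hΛ)
    rwa [Measure.map_map .of_discrete .of_discrete, hproject, Measure.map_id] at this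
  · have := hminus.map (Finset.measurable_restrict₂ hΛ) (Finset.monotone_restrict₂ hΛ)
    rwa [Measure.map_map .of_discrete .of_discrete, hproject, Measure.map_id] at this

/-- Comparison of extremal finite-volume stationary measures in nested
volumes: `ν_{Λ'}^+ ⪯ ν_Λ^+ ⊗ δ_+` and `ν_Λ^- ⊗ δ_- ⪯ ν_{Λ'}^-`, and in particular the
`Λ`-projections are comparable to `ν_Λ^±`. -/
theorem stmt8 {d : ℕ} (hd : 1 ≤ d)
    {S : Type} [Fintype S] [LinearOrder S] [Nonempty S]
    [MeasurableSpace S] [MeasurableSingletonClass S]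
    (P : PCA d S) (hA : Attractive P) (hND : NonDegenerate P)
    (Λ Λ' : Finset (Site d)) (hΛ : Λ ⊆ Λ')
    (νm νp : Measure (Λ → S)) (νm' νp' : Measure (Λ' → S))
    (hνm : IsProbabilityMeasure νm) (hνp : IsProbabilityMeasure νp)
    (hνm' : IsProbabilityMeasure νm') (hνp' : IsProbabilityMeasure νp')
    (hm : νm.bind (finVolKernel P Λ fun _ => botS S) = νm)
    (hp : νp.bind (finVolKernel P Λ fun _ => topS S) = νp)
    (hm' : νm'.bind (finVolKernel P Λ' fun _ => botS S) = νm')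
    (hp' : νp'.bind (finVolKernel P Λ' fun _ => topS S) = νp') :
    StochLE νp'
      (νp.map fun (ω : Λ → S) (k : Λ') => if h : ↑k ∈ Λ then ω ⟨↑k, h⟩ else topS S) ∧
    StochLE
      (νm.map fun (ω : Λ → S) (k : Λ') => if h : ↑k ∈ Λ then ω ⟨↑k, h⟩ else botS S) νm' ∧
    StochLE (νp'.map fun (ω : Λ' → S) (k : Λ) => ω ⟨↑k, hΛ k.2⟩) νp ∧
    StochLE νm (νm'.map fun (ω : Λ' → S) (k : Λ) => ω ⟨↑k, hΛ k.2⟩) :=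
  stmt8_general P hA hND Λ Λ' hΛ νm νp νm' νp' hνm hνp hνm' hνp' hm hp hm' hp'
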